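/- arXiv:1407.2415 — 2 statements merged into one kernel-verified Lean document; each statement's English description precedes it below -/
import Mathlib

section
/- KYP-type sufficiency (discrete-time bounded real lemma, LMI ⇒ norm bound): Suppose A ∈ ℝ^{n×n}, B ∈ ℝ^{n×p}, C ∈ ℝ^{q×n}, D ∈ ℝ^{q×p}, γ > 0, and there exists a symmetric positive definite X ∈ ℝ^{n×n} such that the block matrix [[AᵀXA − X, AᵀXB, Cᵀ],[BᵀXA, BᵀXB − γI, Dᵀ],[C, D, −γI]] is negative definite. Then for every θ ∈ ℝ, the matrix e^{iθ}I − A is invertible and the largest singular value of G(e^{iθ}) = C(e^{iθ}I − A)^{-1}B + D is strictly less than γ. -/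
/-!
For `‖z‖ = 1` and vectors with `A x + B v = z x`, evaluate the Hermitian form of the KYP matrix
at `(x, v, γ⁻¹ (C x + D v))`: the `X`-terms cancel because `|z| = 1`, and what is left is
`γ⁻¹ ‖C x + D v‖² - γ ‖v‖²`, which is therefore negative whenever `(x, v) ≠ 0`. With `v = 0` this
forbids eigenvalues of `A` on the unit circle; with `x = (z I - A)⁻¹ B v` it is the gain bound
`‖G(z) v‖ < γ ‖v‖`. The real LMI applies to complex vectors since `Re (u* M u) = aᵀ M a + bᵀ M b`
for `u = a + i b`.
-/

open Matrix

variable {n p q R : Type*} [Fintype n] [DecidableEq p] [DecidableEq q]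

def kypMatrix [CommRing R] [StarRing R] (A : Matrix n n R) (B : Matrix n p R)
    (C : Matrix q n R) (D : Matrix q p R) (X : Matrix n n R) (γ : R) :
    Matrix ((n ⊕ p) ⊕ q) ((n ⊕ p) ⊕ q) R :=
  fromBlocks (fromBlocks (Aᴴ * X * A - X) (Aᴴ * X * B) (Bᴴ * X * A) (Bᴴ * X * B - γ • 1))
    (fromRows Cᴴ Dᴴ) (fromCols C D) (-(γ • 1))

theorem kypMatrix_map {S : Type*} [CommRing R] [StarRing R] [CommRing S] [StarRing S]
    (f : R →+* S) (hf : Function.Semiconj f star star)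
    (A : Matrix n n R) (B : Matrix n p R) (C : Matrix q n R) (D : Matrix q p R)
    (X : Matrix n n R) (γ : R) :
    (kypMatrix A B C D X γ).map f =
      kypMatrix (A.map f) (B.map f) (C.map f) (D.map f) (X.map f) (f γ) := by
  simp [kypMatrix, fromBlocks_map, fromRows_map, fromCols_map, Matrix.map_mul, Matrix.map_sub,
    conjTranspose_map f hf, smul_one_eq_diagonal, diagonal_map]

theorem star_dotProduct_conjTranspose_mulVec [CommSemiring R] [StarRing R] {m : Type*} [Fintype m]
    (M : Matrix m n R) (x : n → R) (y : m → R) :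
    star x ⬝ᵥ (Mᴴ *ᵥ y) = star (M *ᵥ x) ⬝ᵥ y := by
  rw [dotProduct_mulVec, star_mulVec]

theorem star_dotProduct_kypMatrix_mulVec [Fintype p] [Fintype q] [CommRing R] [StarRing R]
    (A : Matrix n n R) (B : Matrix n p R) (C : Matrix q n R) (D : Matrix q p R)
    (X : Matrix n n R) (γ : R)
    (x : n → R) (v : p → R) (w : q → R) :
    star (Sum.elim (Sum.elim x v) w) ⬝ᵥ (kypMatrix A B C D X γ *ᵥ Sum.elim (Sum.elim x v) w) =
      star (A *ᵥ x + B *ᵥ v) ⬝ᵥ (X *ᵥ (A *ᵥ x + B *ᵥ v)) - star x ⬝ᵥ (X *ᵥ x)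
        - γ * (star v ⬝ᵥ v) + star w ⬝ᵥ (C *ᵥ x + D *ᵥ v) + star (C *ᵥ x + D *ᵥ v) ⬝ᵥ w
        - γ * (star w ⬝ᵥ w) := by
  simp only [kypMatrix, fromBlocks_mulVec, fromRows_mulVec, fromCols_mulVec_sumElim,
    sub_mulVec, neg_mulVec, smul_mulVec, one_mulVec,
    ← mulVec_mulVec, Sum.elim_add_add, Sum.elim_comp_inl, Sum.elim_comp_inr]
  simp only [Function.star_sumElim, sumElim_dotProduct_sumElim, dotProduct_add, dotProduct_sub,
    dotProduct_neg, dotProduct_smul, smul_eq_mul, star_dotProduct_conjTranspose_mulVec, star_add,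
    mulVec_add, add_dotProduct]
  ring

theorem star_dotProduct_kypMatrix_mulVec_of_mulVec_eq_smul [Fintype p] [Fintype q] [Field R]
    [StarRing R] {A : Matrix n n R} {B : Matrix n p R} {C : Matrix q n R} {D : Matrix q p R}
    {X : Matrix n n R} {γ z : R} (hγ : γ ≠ 0) (hγstar : star γ = γ) (hz : star z * z = 1)
    {x : n → R} {v : p → R} (hxv : A *ᵥ x + B *ᵥ v = z • x) :
    star (Sum.elim (Sum.elim x v) (γ⁻¹ • (C *ᵥ x + D *ᵥ v))) ⬝ᵥ
        (kypMatrix A B C D X γ *ᵥ Sum.elim (Sum.elim x v) (γ⁻¹ • (C *ᵥ x + D *ᵥ v))) =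
      γ⁻¹ * (star (C *ᵥ x + D *ᵥ v) ⬝ᵥ (C *ᵥ x + D *ᵥ v)) - γ * (star v ⬝ᵥ v) := by
  rw [star_dotProduct_kypMatrix_mulVec, hxv]
  simp only [star_smul, mulVec_smul, smul_dotProduct, dotProduct_smul, smul_eq_mul, star_inv₀,
    hγstar]
  field_simp
  linear_combination γ * (star x ⬝ᵥ (X *ᵥ x)) * hz

theorem Matrix.PosDef.re_star_dotProduct_map_ofReal_mulVec_pos {M : Matrix n n ℝ}
    (hM : M.PosDef) {u : n → ℂ} (hu : u ≠ 0) : 0 < (star u ⬝ᵥ (M.map Complex.ofReal *ᵥ u)).re := by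
  set a : n → ℝ := fun i => (u i).re
  set b : n → ℝ := fun i => (u i).im
  have hre : (star u ⬝ᵥ (M.map Complex.ofReal *ᵥ u)).re = a ⬝ᵥ (M *ᵥ a) + b ⬝ᵥ (M *ᵥ b) := by
    simp only [dotProduct, mulVec, map_apply, Pi.star_apply, Finset.mul_sum, Complex.re_sum,
      ← Finset.sum_add_distrib]
    refine Finset.sum_congr rfl fun i _ => Finset.sum_congr rfl fun j _ => ?_
    -- the cross terms `a i * M i j * b j` only enter the imaginary part
    simp only [Complex.mul_re, Complex.im_ofReal_mul, Complex.star_def, Complex.ofReal_re,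
      Complex.ofReal_im, Complex.conj_re, Complex.conj_im, a, b]
    ring
  have hab : a ≠ 0 ∨ b ≠ 0 := by
    by_contra! h
    exact hu (funext fun i => Complex.ext (congrFun h.1 i) (congrFun h.2 i))
  rw [hre]
  rcases hab with ha | hb
  · exact add_pos_of_pos_of_nonneg (hM.dotProduct_mulVec_pos ha)
      (hM.posSemidef.dotProduct_mulVec_nonneg b)
  · exact add_pos_of_nonneg_of_pos (hM.posSemidef.dotProduct_mulVec_nonneg a)
      (hM.dotProduct_mulVec_pos hb)

section RCLike

variable {𝕜 : Type*} [RCLike 𝕜]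

theorem re_star_dotProduct_self {m : Type*} [Fintype m] (v : m → 𝕜) :
    RCLike.re (star v ⬝ᵥ v) = ∑ i, ‖v i‖ ^ 2 := by
  simp [dotProduct, RCLike.conj_mul]

theorem sum_norm_sq_lt_of_kypMatrix [Fintype p] [Fintype q] {A : Matrix n n 𝕜}
    {B : Matrix n p 𝕜} {C : Matrix q n 𝕜} {D : Matrix q p 𝕜} {X : Matrix n n 𝕜} {γ : ℝ}
    (hγ : 0 < γ) (hK : ∀ u ≠ 0, RCLike.re (star u ⬝ᵥ (kypMatrix A B C D X (γ : 𝕜) *ᵥ u)) < 0)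
    {z : 𝕜} (hz : ‖z‖ = 1) {x : n → 𝕜} {v : p → 𝕜} (hxv : A *ᵥ x + B *ᵥ v = z • x)
    (hne : x ≠ 0 ∨ v ≠ 0) :
    ∑ i, ‖(C *ᵥ x + D *ᵥ v) i‖ ^ 2 < γ ^ 2 * ∑ j, ‖v j‖ ^ 2 := by
  have hu : Sum.elim (Sum.elim x v) ((γ : 𝕜)⁻¹ • (C *ᵥ x + D *ᵥ v)) ≠ 0 := by
    intro h
    rcases hne with hx | hv
    · exact hx (funext fun i => congrFun h (.inl (.inl i)))
    · exact hv (funext fun j => congrFun h (.inl (.inr j)))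
  have hzz : star z * z = 1 := by rw [RCLike.star_def, RCLike.conj_mul, hz]; simp
  have hneg := hK _ hu
  rw [star_dotProduct_kypMatrix_mulVec_of_mulVec_eq_smul (by exact_mod_cast hγ.ne')
    (RCLike.conj_ofReal γ) hzz hxv] at hneg
  simp only [map_sub, ← RCLike.ofReal_inv, RCLike.re_ofReal_mul, re_star_dotProduct_self] at hneg
  rwa [sub_neg, inv_mul_lt_iff₀ hγ, ← mul_assoc, ← sq] at hneg

theorem isUnit_smul_one_sub_of_kypMatrix [DecidableEq n] [Fintype p] [Fintype q]
    {A : Matrix n n 𝕜} {B : Matrix n p 𝕜} {C : Matrix q n 𝕜} {D : Matrix q p 𝕜}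
    {X : Matrix n n 𝕜} {γ : ℝ} (hγ : 0 < γ)
    (hK : ∀ u ≠ 0, RCLike.re (star u ⬝ᵥ (kypMatrix A B C D X (γ : 𝕜) *ᵥ u)) < 0)
    {z : 𝕜} (hz : ‖z‖ = 1) : IsUnit (z • (1 : Matrix n n 𝕜) - A) := by
  rw [isUnit_iff_isUnit_det, isUnit_iff_ne_zero]
  intro hdet
  obtain ⟨x, hx0, hx⟩ := exists_mulVec_eq_zero_iff.2 hdet
  have hxv : A *ᵥ x + B *ᵥ 0 = z • x := by
    rw [sub_mulVec, smul_mulVec, one_mulVec, sub_eq_zero] at hx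
    rw [mulVec_zero, add_zero, hx]
  have hlt := sum_norm_sq_lt_of_kypMatrix hγ hK hz hxv (.inl hx0)
  simp only [Pi.zero_apply, norm_zero, zero_pow two_ne_zero, Finset.sum_const_zero,
    mul_zero] at hlt
  exact hlt.not_ge (Finset.sum_nonneg fun i _ => sq_nonneg _)

theorem sum_norm_sq_transfer_mulVec_lt [DecidableEq n] [Fintype p] [Fintype q]
    {A : Matrix n n 𝕜} {B : Matrix n p 𝕜} {C : Matrix q n 𝕜} {D : Matrix q p 𝕜}
    {X : Matrix n n 𝕜} {γ : ℝ} (hγ : 0 < γ)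
    (hK : ∀ u ≠ 0, RCLike.re (star u ⬝ᵥ (kypMatrix A B C D X (γ : 𝕜) *ᵥ u)) < 0)
    {z : 𝕜} (hz : ‖z‖ = 1) {v : p → 𝕜} (hv : v ≠ 0) :
    ∑ i, ‖((C * (z • (1 : Matrix n n 𝕜) - A)⁻¹ * B + D) *ᵥ v) i‖ ^ 2
      < γ ^ 2 * ∑ j, ‖v j‖ ^ 2 := by
  set x := (z • (1 : Matrix n n 𝕜) - A)⁻¹ *ᵥ (B *ᵥ v) with hx
  have hxv : A *ᵥ x + B *ᵥ v = z • x := by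
    have hdet := (isUnit_iff_isUnit_det _).1 (isUnit_smul_one_sub_of_kypMatrix hγ hK hz)
    have hEx : (z • (1 : Matrix n n 𝕜) - A) *ᵥ x = B *ᵥ v := by
      rw [hx, mulVec_mulVec, mul_nonsing_inv _ hdet, one_mulVec]
    rw [← hEx, sub_mulVec, smul_mulVec, one_mulVec]
    abel
  rw [add_mulVec, ← mulVec_mulVec, ← mulVec_mulVec, ← hx]
  exact sum_norm_sq_lt_of_kypMatrix hγ hK hz hxv (.inr hv)

end RCLike

theorem stmt9_general (n p q : ℕ) (A : Matrix (Fin n) (Fin n) ℝ) (B : Matrix (Fin n) (Fin p) ℝ)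
    (C : Matrix (Fin q) (Fin n) ℝ) (D : Matrix (Fin q) (Fin p) ℝ) (γ : ℝ) (hγ : 0 < γ)
    (X : Matrix (Fin n) (Fin n) ℝ)
    (hLMI : (-(Matrix.fromBlocks
        (Matrix.fromBlocks (Aᵀ * X * A - X) (Aᵀ * X * B) (Bᵀ * X * A)
          (Bᵀ * X * B - γ • (1 : Matrix (Fin p) (Fin p) ℝ)))
        (Matrix.fromRows Cᵀ Dᵀ)
        (Matrix.fromCols C D)
        (-(γ • (1 : Matrix (Fin q) (Fin q) ℝ))))).PosDef) :
    ∀ θ : ℝ,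
      IsUnit (Complex.exp (θ * Complex.I) • (1 : Matrix (Fin n) (Fin n) ℂ)
        - A.map (Complex.ofReal)) ∧
      ∀ v : Fin p → ℂ, v ≠ 0 →
        Real.sqrt (∑ i, ‖((C.map Complex.ofReal)
            * (Complex.exp (θ * Complex.I) • (1 : Matrix (Fin n) (Fin n) ℂ)
                - A.map Complex.ofReal)⁻¹
            * (B.map Complex.ofReal) + D.map Complex.ofReal).mulVec v i‖ ^ 2)
          < γ * Real.sqrt (∑ j, ‖v j‖ ^ 2) := by
  have hLMI' : (-kypMatrix A B C D X γ).PosDef := by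
    simpa only [kypMatrix, conjTranspose_eq_transpose_of_trivial] using hLMI
  intro θ
  have hz : ‖Complex.exp (θ * Complex.I)‖ = 1 := Complex.norm_exp_ofReal_mul_I θ
  have hK : ∀ u ≠ 0, RCLike.re (star u ⬝ᵥ (kypMatrix (A.map Complex.ofReal)
      (B.map Complex.ofReal) (C.map Complex.ofReal) (D.map Complex.ofReal)
      (X.map Complex.ofReal) (γ : ℂ) *ᵥ u)) < 0 := by
    intro u hu
    have hpos := hLMI'.re_star_dotProduct_map_ofReal_mulVec_pos hu
    rw [Matrix.map_neg _ Complex.ofReal_neg, neg_mulVec, dotProduct_neg, Complex.neg_re,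
      show (kypMatrix A B C D X γ).map Complex.ofReal = _ from
        kypMatrix_map Complex.ofRealHom (fun r => (Complex.conj_ofReal r).symm) ..] at hpos
    exact neg_pos.1 hpos
  refine ⟨isUnit_smul_one_sub_of_kypMatrix hγ hK hz, fun v hv => ?_⟩
  calc _ < Real.sqrt (γ ^ 2 * ∑ j, ‖v j‖ ^ 2) :=
        Real.sqrt_lt_sqrt (Finset.sum_nonneg fun i _ => sq_nonneg _)
          (sum_norm_sq_transfer_mulVec_lt hγ hK hz hv)
    _ = γ * Real.sqrt (∑ j, ‖v j‖ ^ 2) := by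
        rw [Real.sqrt_mul (sq_nonneg γ), Real.sqrt_sq hγ.le]

/-- Discrete-time bounded real lemma (KYP sufficiency): if the KYP LMI holds for some
symmetric positive definite X, then for every θ the matrix e^{iθ}I − A is invertible
and the largest singular value of G(e^{iθ}) = C(e^{iθ}I − A)⁻¹B + D is < γ
(equivalently, ‖G(e^{iθ})v‖ < γ‖v‖ for every nonzero v). -/
theorem stmt9 (n p q : ℕ) (A : Matrix (Fin n) (Fin n) ℝ) (B : Matrix (Fin n) (Fin p) ℝ)
    (C : Matrix (Fin q) (Fin n) ℝ) (D : Matrix (Fin q) (Fin p) ℝ) (γ : ℝ) (hγ : 0 < γ)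
    (X : Matrix (Fin n) (Fin n) ℝ) (hXsymm : X.IsSymm) (hX : X.PosDef)
    (hLMI : (-(Matrix.fromBlocks
        (Matrix.fromBlocks (Aᵀ * X * A - X) (Aᵀ * X * B) (Bᵀ * X * A)
          (Bᵀ * X * B - γ • (1 : Matrix (Fin p) (Fin p) ℝ)))
        (Matrix.fromRows Cᵀ Dᵀ)
        (Matrix.fromCols C D)
        (-(γ • (1 : Matrix (Fin q) (Fin q) ℝ))))).PosDef) :
    ∀ θ : ℝ,
      IsUnit (Complex.exp (θ * Complex.I) • (1 : Matrix (Fin n) (Fin n) ℂ)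
        - A.map (Complex.ofReal)) ∧
      ∀ v : Fin p → ℂ, v ≠ 0 →
        Real.sqrt (∑ i, ‖((C.map Complex.ofReal)
            * (Complex.exp (θ * Complex.I) • (1 : Matrix (Fin n) (Fin n) ℂ)
                - A.map Complex.ofReal)⁻¹
            * (B.map Complex.ofReal) + D.map Complex.ofReal).mulVec v i‖ ^ 2)
          < γ * Real.sqrt (∑ j, ‖v j‖ ^ 2) :=
  stmt9_general n p q A B C D γ hγ X hLMI
end

section
/- If there exists a symmetric positive definite matrix X such that AᵀXA − X is negative definite, then every eigenvalue of A has absolute value strictly less than 1 (A is Schur stable). -/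
/-!
If `A v = μ v` with `v ≠ 0`, then `v* (X - AᵀXA) v = (1 - |μ|²) v* X v`. Both quadratic forms have
positive real part, since the real part of a real quadratic form at a complex vector is the sum
of its values at the real and imaginary parts of that vector. Hence `|μ|² < 1`.
-/

open Matrix

namespace Matrix

variable {n : Type*} [Fintype n]

theorem exists_mulVec_eq_smul_of_mem_spectrum {K : Type*} [Field K] [DecidableEq n]
    {A : Matrix n n K} {μ : K} (hμ : μ ∈ spectrum K A) : ∃ v ≠ 0, A *ᵥ v = μ • v := by
  rw [← spectrum_toLin', ← Module.End.hasEigenvalue_iff_mem_spectrum] at hμ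
  obtain ⟨v, hv⟩ := hμ.exists_hasEigenvector
  exact ⟨v, hv.2, by simpa using hv.apply_eq_smul⟩

theorem star_dotProduct_conjTranspose_mul_mul_mulVec {R : Type*} [CommRing R] [StarRing R]
    {B : Matrix n n R} {v : n → R} {μ : R} (hv : B *ᵥ v = μ • v) (Y : Matrix n n R) :
    star v ⬝ᵥ (Bᴴ * Y * B) *ᵥ v = star μ * μ * (star v ⬝ᵥ Y *ᵥ v) := by
  rw [← mulVec_mulVec, ← mulVec_mulVec, dotProduct_mulVec, ← star_mulVec, hv, mulVec_smul,
    star_smul, smul_dotProduct, dotProduct_smul, smul_eq_mul, smul_eq_mul, mul_assoc]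

theorem norm_lt_one_of_mulVec_eq_smul {B Y : Matrix n n ℂ} {v : n → ℂ} {μ : ℂ}
    (hv : B *ᵥ v = μ • v) (hY : 0 < (star v ⬝ᵥ Y *ᵥ v).re)
    (hL : 0 < (star v ⬝ᵥ (Y - Bᴴ * Y * B) *ᵥ v).re) : ‖μ‖ < 1 := by
  rw [sub_mulVec, dotProduct_sub, star_dotProduct_conjTranspose_mul_mul_mulVec hv,
    Complex.star_def, ← Complex.normSq_eq_conj_mul_self, ← one_sub_mul, ← Complex.ofReal_one,
    ← Complex.ofReal_sub, Complex.re_ofReal_mul] at hL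
  have hμ : Complex.normSq μ < 1 := sub_pos.mp (pos_of_mul_pos_left hL hY.le)
  rwa [Complex.normSq_eq_norm_sq, sq_lt_one_iff₀ (norm_nonneg μ)] at hμ

theorem re_star_dotProduct_map_ofReal_mulVec (M : Matrix n n ℝ) (x : n → ℂ) :
    (star x ⬝ᵥ M.map Complex.ofReal *ᵥ x).re
      = (fun i ↦ (x i).re) ⬝ᵥ M *ᵥ (fun i ↦ (x i).re)
        + (fun i ↦ (x i).im) ⬝ᵥ M *ᵥ (fun i ↦ (x i).im) := by
  simp only [dotProduct, mulVec, Complex.re_sum, Finset.mul_sum, ← Finset.sum_add_distrib]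
  refine Finset.sum_congr rfl fun i _ ↦ Finset.sum_congr rfl fun j _ ↦ ?_
  simp only [Complex.star_def, Pi.star_apply, map_apply, Complex.im_ofReal_mul, Complex.mul_re,
    Complex.conj_re, Complex.conj_im, Complex.ofReal_re, Complex.ofReal_im]
  ring

theorem PosDef.re_star_dotProduct_map_ofReal_mulVec_pos_s10 {M : Matrix n n ℝ} (hM : M.PosDef)
    {x : n → ℂ} (hx : x ≠ 0) : 0 < (star x ⬝ᵥ M.map Complex.ofReal *ᵥ x).re := by
  have pos (y : n → ℝ) (hy : y ≠ 0) : 0 < y ⬝ᵥ M *ᵥ y := by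
    simpa using hM.dotProduct_mulVec_pos hy
  have nonneg (y : n → ℝ) : 0 ≤ y ⬝ᵥ M *ᵥ y := by
    simpa using hM.posSemidef.dotProduct_mulVec_nonneg y
  have hreim : (fun i ↦ (x i).re) ≠ 0 ∨ (fun i ↦ (x i).im) ≠ 0 := by
    contrapose! hx
    exact funext fun i ↦ Complex.ext (congrFun hx.1 i) (congrFun hx.2 i)
  rw [re_star_dotProduct_map_ofReal_mulVec]
  rcases hreim with h | h
  · linarith [pos _ h, nonneg fun i ↦ (x i).im]
  · linarith [pos _ h, nonneg fun i ↦ (x i).re]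

theorem map_ofReal_transpose_mul_mul (B Y : Matrix n n ℝ) :
    (Bᵀ * Y * B).map Complex.ofReal
      = (B.map Complex.ofReal)ᴴ * Y.map Complex.ofReal * B.map Complex.ofReal := by
  rw [← conjTranspose_map _ fun r ↦ (Complex.conj_ofReal r).symm,
    conjTranspose_eq_transpose_of_trivial]
  exact (Matrix.map_mul (f := Complex.ofRealHom)).trans
    (congrArg (· * _) (Matrix.map_mul (f := Complex.ofRealHom)))

end Matrix

theorem stmt10_general (n : ℕ) (A X : Matrix (Fin n) (Fin n) ℝ)
    (hX : X.PosDef) (hLyap : (-(Aᵀ * X * A - X)).PosDef) :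
    ∀ μ : ℂ, μ ∈ spectrum ℂ (A.map Complex.ofReal) → ‖μ‖ < 1 := by
  intro μ hμ
  obtain ⟨v, hv0, hAv⟩ := exists_mulVec_eq_smul_of_mem_spectrum hμ
  refine norm_lt_one_of_mulVec_eq_smul hAv (hX.re_star_dotProduct_map_ofReal_mulVec_pos_s10 hv0) ?_
  rw [← map_ofReal_transpose_mul_mul, ← Matrix.map_sub _ Complex.ofReal_sub, ← neg_sub]
  exact hLyap.re_star_dotProduct_map_ofReal_mulVec_pos_s10 hv0

/-- Lyapunov inequality implies Schur stability: if X ≻ 0 is symmetric with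
AᵀXA − X ≺ 0, then every (complex) eigenvalue of A has modulus < 1. -/
theorem stmt10 (n : ℕ) (A X : Matrix (Fin n) (Fin n) ℝ)
    (hXsymm : X.IsSymm) (hX : X.PosDef) (hLyap : (-(Aᵀ * X * A - X)).PosDef) :
    ∀ μ : ℂ, μ ∈ spectrum ℂ (A.map Complex.ofReal) → ‖μ‖ < 1 :=
  stmt10_general n A X hX hLyap
end
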